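/- arXiv:2405.14464 — 6 statements merged into one kernel-verified Lean document; each statement's English description precedes it below -/
import Mathlib

section
/- Let V be a UM-potential, m = deg(V,0), and W = (V_*)⁻¹ the inverse of its strictly increasing bi-analytic m-th root V_*. Then θ^{1/2 − 1/m}·a(θ) tends to (W'(0)/√2)·∫₀¹ ds/√(1 − s^m) as θ → 0⁺, and this limit is strictly positive. -/
/-- A UM-potential: analytic, nonnegative, unimodal with minimum 0 at 0, tending to +∞. -/
structure IsUM (V : ℝ → ℝ) : Prop where
  analytic : ∀ x : ℝ, AnalyticAt ℝ V x
  nonneg : ∀ y : ℝ, 0 ≤ V y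
  zero : V 0 = 0
  deriv_pos : ∀ y : ℝ, y ≠ 0 → 0 < y * deriv V y
  tendsto_top : Filter.Tendsto V Filter.atTop Filter.atTop
  tendsto_bot : Filter.Tendsto V Filter.atBot Filter.atTop

/-- The degree of `V` at `0`: the least `m ≥ 1` with nonzero `m`-th derivative at `0`. -/
noncomputable def degAt0 (V : ℝ → ℝ) : ℕ :=
  sInf {m : ℕ | 1 ≤ m ∧ iteratedDeriv m V 0 ≠ 0}

/-- The inverse of the positive branch of a UM-potential. -/
noncomputable def Vinv (V : ℝ → ℝ) (θ : ℝ) : ℝ :=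
  sSup {y : ℝ | 0 ≤ y ∧ V y ≤ θ}

/-- The reflected potential. -/
def reflP (V : ℝ → ℝ) : ℝ → ℝ := fun y => V (-y)

/-- `a(θ) = ∫₀^{V⁻¹(θ)} dy / (√2 √(θ - V y))`. -/
noncomputable def aFun (V : ℝ → ℝ) (θ : ℝ) : ℝ :=
  ∫ y in (0:ℝ)..(Vinv V θ), 1 / (Real.sqrt 2 * Real.sqrt (θ - V y))

/-- `a_ξ(θ) = ∫₀^ξ dy / (√2 √(θ - V y))`. -/
noncomputable def aXi (V : ℝ → ℝ) (ξ θ : ℝ) : ℝ :=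
  ∫ y in (0:ℝ)..ξ, 1 / (Real.sqrt 2 * Real.sqrt (θ - V y))

/-- The special class 𝒮𝒫. -/
def IsSP (V : ℝ → ℝ) : Prop :=
  IsUM V ∧ degAt0 V = 2 ∧
  ∃ Vstar W : ℝ → ℝ,
    (∀ x : ℝ, AnalyticAt ℝ Vstar x) ∧ (∀ x : ℝ, AnalyticAt ℝ W x) ∧
    StrictMono Vstar ∧ Function.Bijective Vstar ∧
    (∀ x : ℝ, W (Vstar x) = x) ∧ (∀ x : ℝ, Vstar x ^ 2 = V x) ∧
    ∃ c : ℝ, c ≠ 0 ∧ ∃ f : ℝ → ℝ, (∀ x : ℝ, AnalyticAt ℝ f x) ∧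
      ∀ x : ℝ, W x = c * x + f (x ^ 2)

open MeasureTheory Set Filter Real Topology

/-- Auxiliary integrand. -/
noncomputable def Gaux (W : ℝ → ℝ) (m : ℕ) (θ s : ℝ) : ℝ :=
  deriv W (θ ^ ((1:ℝ)/(m:ℝ)) * s) * (1 / (Real.sqrt 2 * Real.sqrt (1 - s ^ m)))

section aux
variable {V Vstar W : ℝ → ℝ} {m : ℕ}

lemma aux_m_ne_zero (hV : V 0 = 0) (hroot : ∀ x : ℝ, Vstar x ^ m = V x) : m ≠ 0 := by
  intro h
  have := hroot 0
  rw [h, pow_zero, hV] at this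
  norm_num at this

lemma aux_integrable_one_div_sqrt (hm0 : m ≠ 0) :
    IntegrableOn (fun s : ℝ => 1 / Real.sqrt (1 - s ^ m)) (Ioo (0:ℝ) 1) := by
  have hm1 : 1 ≤ m := Nat.one_le_iff_ne_zero.mpr hm0
  have base : IntervalIntegrable (fun x : ℝ => x ^ (-(1/2) : ℝ)) volume 0 1 :=
    intervalIntegral.intervalIntegrable_rpow' (by norm_num)
  have refl : IntervalIntegrable (fun x : ℝ => (1 - x) ^ (-(1/2) : ℝ)) volume 0 1 := by
    simpa using (base.comp_sub_left 1).symm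
  have reflOn : IntegrableOn (fun x : ℝ => (1 - x) ^ (-(1/2) : ℝ)) (Ioo (0:ℝ) 1) :=
    (intervalIntegrable_iff_integrableOn_Ioo_of_le zero_le_one).mp refl
  have meas : Measurable (fun s : ℝ => 1 / Real.sqrt (1 - s ^ m)) := by
    simp only [one_div]
    exact (Real.continuous_sqrt.comp (continuous_const.sub (continuous_pow m))).measurable.inv
  refine reflOn.mono' (meas.aestronglyMeasurable) ?_
  refine (ae_restrict_iff' measurableSet_Ioo).mpr (ae_of_all _ fun s hs => ?_)
  have hs0 : (0:ℝ) ≤ s := hs.1.le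
  have hs1 : s ≤ 1 := hs.2.le
  have hsm : s ^ m ≤ s := by
    simpa using pow_le_pow_of_le_one hs0 hs1 hm1
  have h1 : 1 - s ≤ 1 - s ^ m := by linarith
  have h1pos : 0 < 1 - s := by linarith [hs.2]
  have hsq : Real.sqrt (1 - s) ≤ Real.sqrt (1 - s ^ m) := Real.sqrt_le_sqrt h1
  have hsqpos : 0 < Real.sqrt (1 - s) := Real.sqrt_pos.mpr h1pos
  have key : 1 / Real.sqrt (1 - s ^ m) ≤ 1 / Real.sqrt (1 - s) :=
    one_div_le_one_div_of_le hsqpos hsq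
  have hval : (1 - s) ^ (-(1/2) : ℝ) = 1 / Real.sqrt (1 - s) := by
    rw [Real.rpow_neg h1pos.le, Real.sqrt_eq_rpow]; exact (one_div _).symm
  rw [hval, Real.norm_eq_abs, abs_of_nonneg (by positivity)]
  exact key

lemma aux_integrable_G (hm0 : m ≠ 0) :
    IntegrableOn (fun s : ℝ => 1 / (Real.sqrt 2 * Real.sqrt (1 - s ^ m))) (Ioo (0:ℝ) 1) := by
  have h := (aux_integrable_one_div_sqrt hm0).const_mul ((Real.sqrt 2)⁻¹)
  have heq : (fun s : ℝ => 1 / (Real.sqrt 2 * Real.sqrt (1 - s ^ m)))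
      = fun s : ℝ => (Real.sqrt 2)⁻¹ * (1 / Real.sqrt (1 - s ^ m)) :=
    funext fun s => by rw [one_div, one_div, mul_inv]
  rw [heq]
  exact h

end aux

/-- `θ^{1/2 - 1/m} · a(θ) → (W'(0)/√2)·∫₀¹ ds/√(1-s^m) > 0` as `θ → 0⁺`. -/
theorem stmt1 (V Vstar W : ℝ → ℝ) (hV : IsUM V) (m : ℕ) (hm : m = degAt0 V)
    (hVs : ∀ x : ℝ, AnalyticAt ℝ Vstar x) (hW : ∀ x : ℝ, AnalyticAt ℝ W x)
    (hmono : StrictMono Vstar) (hbij : Function.Bijective Vstar)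
    (hderiv : ∀ x : ℝ, 0 < deriv Vstar x)
    (hinv : ∀ x : ℝ, W (Vstar x) = x) (hroot : ∀ x : ℝ, Vstar x ^ m = V x) :
    Filter.Tendsto (fun θ : ℝ => θ ^ ((1:ℝ)/2 - 1/(m:ℝ)) * aFun V θ)
      (nhdsWithin 0 (Set.Ioi 0))
      (nhds ((deriv W 0 / Real.sqrt 2) * ∫ s in (0:ℝ)..1, 1 / Real.sqrt (1 - s ^ m))) ∧
    0 < (deriv W 0 / Real.sqrt 2) * ∫ s in (0:ℝ)..1, 1 / Real.sqrt (1 - s ^ m) := by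
  have hm0 : m ≠ 0 := aux_m_ne_zero hV.zero hroot
  have hm1 : 1 ≤ m := Nat.one_le_iff_ne_zero.mpr hm0
  have hmr : (0:ℝ) < (m:ℝ) := by exact_mod_cast Nat.pos_of_ne_zero hm0
  have hmr' : (0:ℝ) < 1/(m:ℝ) := by positivity
  -- basic facts
  have hVs0 : Vstar 0 = 0 := by
    have := hroot 0
    rw [hV.zero] at this
    exact pow_eq_zero_iff hm0 |>.mp this
  have hW0 : W 0 = 0 := by
    have := hinv 0
    rwa [hVs0] at this
  have hVsW : ∀ x : ℝ, Vstar (W x) = x := by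
    intro x
    obtain ⟨y, rfl⟩ := hbij.2 x
    rw [hinv]
  have hWmono : StrictMono W := by
    intro a b hab
    by_contra h
    push_neg at h
    have : Vstar (W b) ≤ Vstar (W a) := hmono.monotone h
    rw [hVsW, hVsW] at this
    linarith
  have hWdiff : ∀ x : ℝ, DifferentiableAt ℝ W x := fun x => (hW x).differentiableAt
  have hWderiv : ∀ u : ℝ, deriv W u * deriv Vstar (W u) = 1 := by
    intro u
    have hcomp : (W ∘ Vstar) = id := funext hinv
    have h1 : deriv (W ∘ Vstar) (W u) = deriv W (Vstar (W u)) * deriv Vstar (W u) :=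
      deriv_comp _ (hWdiff _) (hVs _).differentiableAt
    rw [hcomp, deriv_id', hVsW] at h1
    exact h1.symm
  have hWdpos : ∀ u : ℝ, 0 < deriv W u := by
    intro u
    have h := hWderiv u
    have h2 := hderiv (W u)
    nlinarith
  have hW'cont : Continuous (deriv W) := by
    have h : AnalyticOnNhd ℝ W Set.univ := fun x _ => hW x
    exact continuousOn_univ.mp h.deriv.continuousOn
  -- key identity
  have key : ∀ θ : ℝ, 0 < θ →
      θ ^ ((1:ℝ)/2 - 1/(m:ℝ)) * aFun V θ = ∫ s in Ioo (0:ℝ) 1, Gaux W m θ s := by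
    intro θ hθ
    set t : ℝ := θ ^ ((1:ℝ)/(m:ℝ)) with ht_def
    have ht : 0 < t := Real.rpow_pos_of_pos hθ _
    have htm : t ^ m = θ := by
      rw [ht_def, ← Real.rpow_natCast (θ ^ ((1:ℝ)/(m:ℝ))) m, ← Real.rpow_mul hθ.le]
      rw [one_div, inv_mul_cancel₀ (ne_of_gt hmr), Real.rpow_one]
    have hWt : 0 < W t := by rw [← hW0]; exact hWmono ht
    -- Vinv
    have hset : {y : ℝ | 0 ≤ y ∧ V y ≤ θ} = Icc 0 (W t) := by
      ext y
      simp only [mem_setOf_eq, mem_Icc]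
      constructor
      · rintro ⟨hy0, hyV⟩
        refine ⟨hy0, ?_⟩
        have hVsy : 0 ≤ Vstar y := by
          rw [← hVs0]; exact hmono.monotone hy0
        have : Vstar y ^ m ≤ t ^ m := by rw [hroot, htm]; exact hyV
        have hle : Vstar y ≤ t := (pow_le_pow_iff_left₀ hVsy ht.le hm0).mp this
        have : Vstar y ≤ Vstar (W t) := by rwa [hVsW]
        exact hmono.le_iff_le.mp this
      · rintro ⟨hy0, hyW⟩
        refine ⟨hy0, ?_⟩
        have hVsy : 0 ≤ Vstar y := by rw [← hVs0]; exact hmono.monotone hy0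
        have hle : Vstar y ≤ t := by
          have := hmono.monotone hyW
          rwa [hVsW] at this
        calc V y = Vstar y ^ m := (hroot y).symm
          _ ≤ t ^ m := pow_le_pow_left₀ hVsy hle m
          _ = θ := htm
    have hVinv : Vinv V θ = W t := by
      rw [Vinv, hset, csSup_Icc hWt.le]
    -- step B
    have hB : aFun V θ = ∫ y in Ioo (0:ℝ) (W t), 1 / (Real.sqrt 2 * Real.sqrt (θ - V y)) := by
      rw [aFun, hVinv, intervalIntegral.integral_of_le hWt.le, integral_Ioc_eq_integral_Ioo]
    -- step C: change of variables y = W u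
    have himg : W '' Ioo 0 t = Ioo 0 (W t) := by
      ext y
      constructor
      · rintro ⟨u, ⟨hu0, hut⟩, rfl⟩
        exact ⟨by rw [← hW0]; exact hWmono hu0, hWmono hut⟩
      · rintro ⟨hy0, hyt⟩
        refine ⟨Vstar y, ⟨?_, ?_⟩, hinv y⟩
        · rw [← hVs0]; exact hmono hy0
        · have := hmono hyt; rwa [hVsW] at this
    have hC : (∫ y in Ioo (0:ℝ) (W t), 1 / (Real.sqrt 2 * Real.sqrt (θ - V y)))
        = ∫ u in Ioo (0:ℝ) t, deriv W u * (1 / (Real.sqrt 2 * Real.sqrt (θ - u ^ m))) := by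
      rw [← himg,
        integral_image_eq_integral_abs_deriv_smul measurableSet_Ioo
          (fun u _ => ((hWdiff u).hasDerivAt).hasDerivWithinAt) (hWmono.injective.injOn) _]
      refine setIntegral_congr_fun measurableSet_Ioo (fun u _ => ?_)
      rw [smul_eq_mul, abs_of_pos (hWdpos u)]
      congr 2
      rw [← hroot (W u), hVsW]
    -- step D: change of variables u = t * s
    have himg2 : (fun s : ℝ => t * s) '' Ioo 0 1 = Ioo 0 t := by
      ext u
      constructor
      · rintro ⟨s, ⟨hs0, hs1⟩, rfl⟩
        simp only [mem_Ioo]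
        exact ⟨by positivity, by nlinarith⟩
      · rintro ⟨hu0, hut⟩
        exact ⟨u / t, ⟨div_pos hu0 ht, (div_lt_one ht).mpr hut⟩, mul_div_cancel₀ u ht.ne' ▸ by
          field_simp⟩
    have hdts : ∀ s : ℝ, HasDerivAt (fun s : ℝ => t * s) t s := fun s => by
      simpa using (hasDerivAt_id s).const_mul t
    have hD : (∫ u in Ioo (0:ℝ) t, deriv W u * (1 / (Real.sqrt 2 * Real.sqrt (θ - u ^ m))))
        = ∫ s in Ioo (0:ℝ) 1,
            |t| * (deriv W (t * s) * (1 / (Real.sqrt 2 * Real.sqrt (θ - (t * s) ^ m)))) := by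
      rw [← himg2,
        integral_image_eq_integral_abs_deriv_smul measurableSet_Ioo
          (fun s _ => (hdts s).hasDerivWithinAt)
          (fun a _ b _ hab => mul_left_cancel₀ ht.ne' hab) _]
      simp [smul_eq_mul]
    -- step E: pointwise algebra
    have hE : (∫ s in Ioo (0:ℝ) 1,
          |t| * (deriv W (t * s) * (1 / (Real.sqrt 2 * Real.sqrt (θ - (t * s) ^ m)))))
        = ∫ s in Ioo (0:ℝ) 1, (t / Real.sqrt θ) * Gaux W m θ s := by
      refine setIntegral_congr_fun measurableSet_Ioo (fun s hs => ?_)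
      have hsm : s ^ m < 1 := pow_lt_one₀ hs.1.le hs.2 hm0
      have h1sm : 0 < 1 - s ^ m := by linarith
      have hts : (t * s) ^ m = θ * s ^ m := by rw [mul_pow, htm]
      have hsplit : Real.sqrt (θ - (t * s) ^ m) = Real.sqrt θ * Real.sqrt (1 - s ^ m) := by
        rw [hts, show θ - θ * s ^ m = θ * (1 - s ^ m) by ring, Real.sqrt_mul hθ.le]
      rw [hsplit, Gaux, abs_of_pos ht, ← ht_def]
      have hsθ : Real.sqrt θ ≠ 0 := ne_of_gt (Real.sqrt_pos.mpr hθ)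
      have hs2 : Real.sqrt 2 ≠ 0 := by positivity
      have hs1m : Real.sqrt (1 - s ^ m) ≠ 0 := ne_of_gt (Real.sqrt_pos.mpr h1sm)
      simp only [one_div, mul_inv, div_eq_mul_inv]
      ring
    -- pull out constant and finish
    have hF : (∫ s in Ioo (0:ℝ) 1, (t / Real.sqrt θ) * Gaux W m θ s)
        = (t / Real.sqrt θ) * ∫ s in Ioo (0:ℝ) 1, Gaux W m θ s :=
      integral_const_mul _ _
    rw [hB, hC, hD, hE, hF, ← mul_assoc]
    have hcoef : θ ^ ((1:ℝ)/2 - 1/(m:ℝ)) * (t / Real.sqrt θ) = 1 := by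
      rw [Real.sqrt_eq_rpow, ht_def, ← Real.rpow_sub hθ, ← Real.rpow_add hθ]
      rw [show (1:ℝ)/2 - 1/(m:ℝ) + (1/(m:ℝ) - 1/2) = 0 by ring, Real.rpow_zero]
    rw [hcoef, one_mul]
  -- integrability of the dominating function
  have hIOn : IntegrableOn (fun s : ℝ => 1 / (Real.sqrt 2 * Real.sqrt (1 - s ^ m)))
      (Ioo (0:ℝ) 1) := aux_integrable_G hm0
  -- bound M for deriv W on [0,1]
  obtain ⟨M, hM⟩ := isCompact_Icc.exists_bound_of_continuousOn
    (s := Icc (0:ℝ) 1) hW'cont.continuousOn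
  -- measurability of the base factor
  have measG : Measurable (fun s : ℝ => 1 / (Real.sqrt 2 * Real.sqrt (1 - s ^ m))) := by
    simp only [one_div]
    exact ((continuous_const.mul
      (Real.continuous_sqrt.comp (continuous_const.sub (continuous_pow m)))).measurable).inv
  -- dominated convergence
  have hlim : Tendsto (fun θ : ℝ => ∫ s in Ioo (0:ℝ) 1, Gaux W m θ s)
      (nhdsWithin 0 (Set.Ioi 0))
      (𝓝 (∫ s in Ioo (0:ℝ) 1,
        deriv W 0 * (1 / (Real.sqrt 2 * Real.sqrt (1 - s ^ m))))) := by
    refine tendsto_integral_filter_of_dominated_convergence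
      (fun s => M * (1 / (Real.sqrt 2 * Real.sqrt (1 - s ^ m)))) ?_ ?_ ?_ ?_
    · filter_upwards with θ
      exact ((hW'cont.comp (continuous_const.mul continuous_id)).measurable.mul
        measG).aestronglyMeasurable
    · have hmem : Ioc (0:ℝ) 1 ∈ nhdsWithin (0:ℝ) (Set.Ioi 0) :=
        Ioc_mem_nhdsGT_of_mem ⟨le_refl 0, one_pos⟩
      filter_upwards [hmem] with θ hθ
      refine (ae_restrict_iff' measurableSet_Ioo).mpr (ae_of_all _ fun s hs => ?_)
      have ht : 0 < θ ^ ((1:ℝ)/(m:ℝ)) := Real.rpow_pos_of_pos hθ.1 _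
      have ht1 : θ ^ ((1:ℝ)/(m:ℝ)) ≤ 1 := Real.rpow_le_one hθ.1.le hθ.2 hmr'.le
      have hts : θ ^ ((1:ℝ)/(m:ℝ)) * s ∈ Icc (0:ℝ) 1 := by
        constructor
        · exact mul_nonneg ht.le hs.1.le
        · calc θ ^ ((1:ℝ)/(m:ℝ)) * s ≤ 1 * 1 :=
            mul_le_mul ht1 hs.2.le hs.1.le zero_le_one
          _ = 1 := by ring
      have hMb := hM _ hts
      rw [Gaux, Real.norm_eq_abs, abs_mul]
      have hpos : 0 ≤ 1 / (Real.sqrt 2 * Real.sqrt (1 - s ^ m)) := by positivity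
      rw [abs_of_nonneg hpos]
      exact mul_le_mul_of_nonneg_right (by rwa [← Real.norm_eq_abs]) hpos
    · exact hIOn.const_mul M
    · refine (ae_restrict_iff' measurableSet_Ioo).mpr (ae_of_all _ fun s hs => ?_)
      have htend : Tendsto (fun θ : ℝ => θ ^ ((1:ℝ)/(m:ℝ)))
          (nhdsWithin 0 (Set.Ioi 0)) (𝓝 0) := by
        have hc : ContinuousAt (fun x : ℝ => x ^ ((1:ℝ)/(m:ℝ))) 0 :=
          Real.continuousAt_rpow_const 0 _ (Or.inr hmr'.le)
        have h2 := hc.tendsto.mono_left (nhdsWithin_le_nhds (s := Set.Ioi (0:ℝ)))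
        rwa [Real.zero_rpow (ne_of_gt hmr')] at h2
      have h2 : Tendsto (fun θ : ℝ => θ ^ ((1:ℝ)/(m:ℝ)) * s)
          (nhdsWithin 0 (Set.Ioi 0)) (𝓝 0) := by
        simpa using htend.mul_const s
      have h3 : Tendsto (fun θ : ℝ => deriv W (θ ^ ((1:ℝ)/(m:ℝ)) * s))
          (nhdsWithin 0 (Set.Ioi 0)) (𝓝 (deriv W 0)) :=
        (hW'cont.continuousAt.tendsto).comp h2
      exact h3.mul_const _
  -- identify the limit
  have hlimval : (∫ s in Ioo (0:ℝ) 1, deriv W 0 * (1 / (Real.sqrt 2 * Real.sqrt (1 - s ^ m))))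
      = (deriv W 0 / Real.sqrt 2) * ∫ s in (0:ℝ)..1, 1 / Real.sqrt (1 - s ^ m) := by
    rw [intervalIntegral.integral_of_le zero_le_one, integral_Ioc_eq_integral_Ioo,
      ← integral_const_mul]
    refine setIntegral_congr_fun measurableSet_Ioo (fun s _ => ?_)
    rw [one_div, one_div, mul_inv, div_eq_mul_inv]
    ring
  constructor
  · refine Tendsto.congr' ?_ (hlimval ▸ hlim)
    filter_upwards [eventually_mem_nhdsWithin] with θ hθ
    exact (key θ hθ).symm
  · have hWd0 : 0 < deriv W 0 := hWdpos 0
    have hII : 0 < ∫ s in (0:ℝ)..1, 1 / Real.sqrt (1 - s ^ m) := by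
      refine intervalIntegral.intervalIntegral_pos_of_pos_on ?_ ?_ one_pos
      · rw [intervalIntegrable_iff_integrableOn_Ioo_of_le zero_le_one]
        exact aux_integrable_one_div_sqrt hm0
      · intro s hs
        have hsm : s ^ m < 1 := pow_lt_one₀ hs.1.le hs.2 hm0
        have : 0 < Real.sqrt (1 - s ^ m) := Real.sqrt_pos.mpr (by linarith)
        positivity
    have : 0 < deriv W 0 / Real.sqrt 2 := div_pos hWd0 (by positivity)
    exact mul_pos this hII
end

section
/- Let V be a UM-potential in the special class SP, with W = (V_*)⁻¹ the inverse of its bi-analytic square root. If V is an even function, then V(x) = (x/c)² for all x ∈ ℝ, where c = W'(0) ≠ 0. -/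
/-- an even 𝒮𝒫-potential is the quadratic `V(x) = (x/c)²` with `c = W'(0) ≠ 0`. -/
theorem stmt9 (V Vstar W : ℝ → ℝ) (hV : IsUM V) (hdeg : degAt0 V = 2)
    (hVs : ∀ x : ℝ, AnalyticAt ℝ Vstar x) (hW : ∀ x : ℝ, AnalyticAt ℝ W x)
    (hmono : StrictMono Vstar) (hbij : Function.Bijective Vstar)
    (hinv : ∀ x : ℝ, W (Vstar x) = x) (hroot : ∀ x : ℝ, Vstar x ^ 2 = V x)
    (hSP : ∃ c : ℝ, c ≠ 0 ∧ ∃ f : ℝ → ℝ, (∀ x : ℝ, AnalyticAt ℝ f x) ∧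
      ∀ x : ℝ, W x = c * x + f (x ^ 2))
    (heven : ∀ x : ℝ, V (-x) = V x) :
    deriv W 0 ≠ 0 ∧ ∀ x : ℝ, V x = (x / deriv W 0) ^ 2 := by
  obtain ⟨c, hc, f, hf, hWf⟩ := hSP
  have hVs0 : Vstar 0 = 0 := by
    have h := hroot 0
    rw [hV.zero] at h
    exact pow_eq_zero_iff two_ne_zero |>.mp h
  have hodd : ∀ x, Vstar (-x) = -Vstar x := by
    intro x
    have h : Vstar (-x) ^ 2 = Vstar x ^ 2 := by rw [hroot, hroot, heven]
    rcases sq_eq_sq_iff_eq_or_eq_neg.mp h with h1 | h1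
    · have hx : -x = x := hmono.injective h1
      have hx0 : x = 0 := by linarith
      rw [hx0, neg_zero, hVs0, neg_zero]
    · exact h1
  have hWodd : ∀ y, W (-y) = -W y := by
    intro y
    obtain ⟨x, rfl⟩ := hbij.2 y
    rw [show -Vstar x = Vstar (-x) from (hodd x).symm, hinv, hinv]
  have hfz : ∀ x : ℝ, f (x ^ 2) = 0 := by
    intro x
    have h := hWodd x
    rw [hWf, hWf, neg_pow, show ((-1:ℝ)) ^ 2 = 1 by norm_num, one_mul] at h
    linarith
  have hWlin : ∀ x : ℝ, W x = c * x := by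
    intro x; rw [hWf, hfz, add_zero]
  have hderiv : deriv W 0 = c := by
    have hW' : W = fun x => c * x := funext hWlin
    rw [hW']
    simpa using ((hasDerivAt_id (0:ℝ)).const_mul c).deriv
  constructor
  · rw [hderiv]; exact hc
  · intro x
    rw [hderiv, ← hroot]
    have h := hinv x
    rw [hWlin] at h
    have : Vstar x = x / c := by field_simp; linarith
    rw [this]
end

section
/- Let V be a UM-potential in the special class SP. Then a(θ) + ā(θ) = π/√(V''(0)) for every θ > 0; in particular the function a + ā is constant on (0,∞). -/
open Real MeasureTheory Set intervalIntegral

/-!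
Write `V = φ ^ 2`, where `φ = V_*` is an order isomorphism of `ℝ` fixing `0`, and let `W = φ⁻¹`.
Then `V⁻¹(s²) = W s`, and the monotone substitution `y = W x` turns `a(s²)` into
`∫₀ˢ W'(x) dx / (√2 √(s² - x²))`. The reflected potential is the square of `y ↦ -φ(-y)`, whose
inverse `x ↦ -W(-x)` has derivative `W'(-x)`, so `ā(s²)` is the same integral with `W'(-x)`.
If `W x = c x + f(x²)` then `W'(x) + W'(-x) = 2c`, hence `a + ā = (2c / √2) · π / 2`; and
`V''(0) = 2 φ'(0)² = 2 / c²`.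
-/

theorem integral_inv_sqrt_sq_sub_sq {r : ℝ} (hr : 0 < r) :
    ∫ x in 0..r, (√(r ^ 2 - x ^ 2))⁻¹ = π / 2 := by
  have hsub := integral_comp_mul_deriv_of_deriv_nonneg (a := 0) (b := π / 2)
    (g := fun x => (√(r ^ 2 - x ^ 2))⁻¹) (f := fun t => r * sin t) (f' := fun t => r * cos t)
    (by fun_prop) (fun t _ => (hasDerivAt_sin t).const_mul r)
    (fun t ht => by
      rw [min_eq_left (by positivity), max_eq_right (by positivity)] at ht
      exact mul_nonneg hr.le (cos_nonneg_of_mem_Icc ⟨by linarith [ht.1, pi_pos], ht.2.le⟩))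
  simp only [sin_zero, mul_zero, sin_pi_div_two, mul_one] at hsub
  rw [← hsub, integral_of_le (by positivity), integral_Ioc_eq_integral_Ioo,
    setIntegral_congr_fun measurableSet_Ioo (g := fun _ => (1 : ℝ))]
  · simpa using pi_div_two_pos.le
  · intro t ⟨ht0, ht⟩
    have hcos : 0 < r * cos t := mul_pos hr (cos_pos_of_mem_Ioo ⟨by linarith [pi_pos], ht⟩)
    have : r ^ 2 - (r * sin t) ^ 2 = (r * cos t) ^ 2 := by
      linear_combination r ^ 2 * (cos_sq_add_sin_sq t).symm
    simp only [Function.comp_apply, this, sqrt_sq hcos.le, inv_mul_cancel₀ hcos.ne']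

theorem intervalIntegrable_inv_sqrt_sq_sub_sq {r : ℝ} (hr : 0 < r) :
    IntervalIntegrable (fun x => (√(r ^ 2 - x ^ 2))⁻¹) volume 0 r := by
  by_contra h
  have := (integral_undef h).symm.trans (integral_inv_sqrt_sq_sub_sq hr)
  linarith [pi_pos]

theorem iteratedDeriv_two_sq_of_eq_zero {φ : ℝ → ℝ} (hφ : ContDiff ℝ 2 φ) {x : ℝ} (hx : φ x = 0) :
    iteratedDeriv 2 (fun y => φ y ^ 2) x = 2 * deriv φ x ^ 2 := by
  have hd : Differentiable ℝ φ := hφ.differentiable two_ne_zero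
  have hdd : Differentiable ℝ (deriv φ) :=
    ((contDiff_succ_iff_deriv (n := 1)).mp hφ).2.2.differentiable one_ne_zero
  have hderiv : deriv (fun y => φ y ^ 2) = fun y => 2 * φ y * deriv φ y := by
    ext y; simp [deriv_fun_pow (hd y)]
  rw [iteratedDeriv_succ, iteratedDeriv_one, hderiv,
    deriv_fun_mul ((hd x).const_mul 2) (hdd x), deriv_const_mul _ (hd x), hx]
  ring

theorem deriv_mul_add_comp_sq {f : ℝ → ℝ} (hf : Differentiable ℝ f) (c x : ℝ) :
    deriv (fun x => c * x + f (x ^ 2)) x = c + 2 * x * deriv f (x ^ 2) := by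
  have h : HasDerivAt (fun x => c * x + f (x ^ 2)) (c * 1 + deriv f (x ^ 2) * (2 * x ^ 1)) x :=
    ((hasDerivAt_id x).const_mul c).add ((hf (x ^ 2)).hasDerivAt.comp x (hasDerivAt_pow 2 x))
  rw [h.deriv]
  ring

namespace OrderIso

def negConj (e : ℝ ≃o ℝ) : ℝ ≃o ℝ where
  toFun y := -e (-y)
  invFun x := -e.symm (-x)
  left_inv y := by simp
  right_inv x := by simp
  map_rel_iff' := by simp

@[simp]
theorem negConj_apply (e : ℝ ≃o ℝ) (y : ℝ) : e.negConj y = -e (-y) := rfl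

end OrderIso

section SquarePotential

variable {e : ℝ ≃o ℝ}

theorem reflP_sq_orderIso : reflP (fun y => e y ^ 2) = fun y => e.negConj y ^ 2 := by
  ext y; simp [reflP]

theorem vinv_sq_orderIso (he : e 0 = 0) {s : ℝ} (hs : 0 ≤ s) :
    Vinv (fun y => e y ^ 2) (s ^ 2) = e.symm s := by
  have hset : {y : ℝ | 0 ≤ y ∧ e y ^ 2 ≤ s ^ 2} = Icc 0 (e.symm s) := by
    ext y
    have h0 : 0 ≤ y ↔ 0 ≤ e y := by rw [← e.le_iff_le, he]
    simp only [mem_ofPred_eq, mem_Icc, h0, e.le_symm_apply]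
    exact and_congr_right fun hy => pow_le_pow_iff_left₀ hy hs two_ne_zero
  rw [Vinv, hset, csSup_Icc (e.le_symm_apply.mpr (he.symm ▸ hs))]

theorem aFun_sq_orderIso (he : e 0 = 0) (hd : Differentiable ℝ e.symm) {s : ℝ} (hs : 0 ≤ s) :
    aFun (fun y => e y ^ 2) (s ^ 2) = ∫ x in 0..s, deriv e.symm x / (√2 * √(s ^ 2 - x ^ 2)) := by
  have hsymm0 : e.symm 0 = 0 := e.symm_apply_eq.mpr he.symm
  have hsub := integral_comp_mul_deriv_of_deriv_nonneg (a := 0) (b := s)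
    (g := fun y => 1 / (√2 * √(s ^ 2 - e y ^ 2))) (f := e.symm) (f' := deriv e.symm)
    e.symm.continuous.continuousOn (fun x _ => (hd x).hasDerivAt)
    (fun x _ => e.symm.monotone.deriv_nonneg)
  rw [hsymm0] at hsub
  rw [aFun, vinv_sq_orderIso he hs, ← hsub]
  exact intervalIntegral.integral_congr fun x _ => by simp [div_eq_inv_mul]

theorem aFun_add_aFun_reflP_sq_orderIso (he : e 0 = 0)
    (hd : Differentiable ℝ e.symm) {c : ℝ}
    (hsum : ∀ x, deriv e.symm x + deriv e.symm (-x) = 2 * c) {θ : ℝ} (hθ : 0 < θ) :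
    aFun (fun y => e y ^ 2) θ + aFun (reflP fun y => e y ^ 2) θ = c * π / √2 := by
  obtain ⟨s, hs, rfl⟩ : ∃ s, 0 < s ∧ s ^ 2 = θ := ⟨√θ, sqrt_pos.2 hθ, sq_sqrt hθ.le⟩
  have hd_neg (x : ℝ) : HasDerivAt e.negConj.symm (deriv e.symm (-x)) x := by
    have := ((hd (-x)).hasDerivAt.comp x (hasDerivAt_neg x)).neg
    rwa [mul_neg_one, neg_neg] at this
  have hnonneg (x : ℝ) : 0 ≤ deriv e.symm x := e.symm.monotone.deriv_nonneg
  have hle (x : ℝ) : deriv e.symm x ≤ 2 * c := by linarith [hsum x, hnonneg (-x)]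
  have hint {g : ℝ → ℝ} (hg : Measurable g) (h0 : ∀ x, 0 ≤ g x) (h2c : ∀ x, g x ≤ 2 * c) :
      IntervalIntegrable (fun x => g x / (√2 * √(s ^ 2 - x ^ 2))) volume 0 s := by
    refine ((intervalIntegrable_inv_sqrt_sq_sub_sq hs).const_mul (2 * c / √2)).mono_fun'
      (hg.div (by fun_prop)).aestronglyMeasurable (Filter.Eventually.of_forall fun x => ?_)
    dsimp only
    rw [Real.norm_of_nonneg (div_nonneg (h0 x) (by positivity)), div_mul_eq_div_div,
      ← div_eq_mul_inv]
    gcongr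
    exact h2c x
  have hrefl : aFun (reflP fun y => e y ^ 2) (s ^ 2) =
      ∫ x in 0..s, deriv e.symm (-x) / (√2 * √(s ^ 2 - x ^ 2)) := by
    simp only [reflP_sq_orderIso, aFun_sq_orderIso (by simp [he])
      (fun x => (hd_neg x).differentiableAt) hs.le, fun x => (hd_neg x).deriv]
  rw [aFun_sq_orderIso he hd hs.le, hrefl, ← integral_add
      (hint (measurable_deriv _) hnonneg fun x => ?_)
      (hint (g := fun x => deriv e.symm (-x)) ((measurable_deriv _).comp measurable_neg)
        (fun x => hnonneg (-x)) fun x => ?_)]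
  · simp_rw [← add_div, hsum, div_mul_eq_div_div, div_eq_mul_inv (2 * c / √2)]
    rw [intervalIntegral.integral_const_mul, integral_inv_sqrt_sq_sub_sq hs]
    ring
  · exact hle x
  · exact hle (-x)

theorem iteratedDeriv_two_sq_orderIso (he : e 0 = 0) (hcd : ContDiff ℝ 2 e) {c : ℝ} (hc : c ≠ 0)
    (hsymm : HasDerivAt e.symm c 0) : iteratedDeriv 2 (fun y => e y ^ 2) 0 = 2 / c ^ 2 := by
  have he' : HasDerivAt e c⁻¹ 0 := HasDerivAt.of_local_left_inverse e.continuous.continuousAt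
    (by rwa [he]) hc (Filter.Eventually.of_forall e.symm_apply_apply)
  rw [iteratedDeriv_two_sq_of_eq_zero hcd he, he'.deriv]
  field_simp

end SquarePotential

/-- for `V ∈ 𝒮𝒫`, `a(θ) + ā(θ) = π/√(V''(0))` for all `θ > 0`;
in particular `a + ā` is constant on `(0,∞)`. -/
theorem stmt10 (V : ℝ → ℝ) (hV : IsSP V) :
    (∀ θ : ℝ, 0 < θ →
      aFun V θ + aFun (reflP V) θ = Real.pi / Real.sqrt (iteratedDeriv 2 V 0)) ∧
    ∀ θ₁ θ₂ : ℝ, 0 < θ₁ → 0 < θ₂ →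
      aFun V θ₁ + aFun (reflP V) θ₁ = aFun V θ₂ + aFun (reflP V) θ₂ := by
  obtain ⟨hUM, -, Vstar, W, hVstar, hW, hmono, hbij, hWV, hsq, c, hc, f, hf, hWf⟩ := hV
  obtain ⟨e, rfl⟩ : ∃ e : ℝ ≃o ℝ, ⇑e = Vstar := ⟨hmono.orderIsoOfSurjective Vstar hbij.2, rfl⟩
  obtain rfl : V = fun y => e y ^ 2 := funext fun y => (hsq y).symm
  obtain rfl : W = e.symm := funext fun x => by simpa using hWV (e.symm x)
  have he0 : e 0 = 0 := pow_eq_zero_iff two_ne_zero |>.mp hUM.zero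
  have hd : Differentiable ℝ e.symm := fun x => (hW x).differentiableAt
  have hderiv := deriv_mul_add_comp_sq (fun x => (hf x).differentiableAt) c
  have hc0 : deriv e.symm 0 = c := by rw [funext hWf, hderiv]; ring
  have hsum (x : ℝ) : deriv e.symm x + deriv e.symm (-x) = 2 * c := by
    rw [funext hWf, hderiv, hderiv, neg_sq]; ring
  have hc_pos : 0 < c := (hc0 ▸ e.symm.monotone.deriv_nonneg).lt_of_ne' hc
  have hV2 : iteratedDeriv 2 (fun y => e y ^ 2) 0 = 2 / c ^ 2 :=
    iteratedDeriv_two_sq_orderIso he0 (AnalyticOnNhd.contDiff fun x _ => hVstar x) hc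
      (hc0 ▸ (hd 0).hasDerivAt)
  have key (θ : ℝ) (hθ : 0 < θ) : aFun (fun y => e y ^ 2) θ + aFun (reflP fun y => e y ^ 2) θ =
      π / √(iteratedDeriv 2 (fun y => e y ^ 2) 0) := by
    rw [aFun_add_aFun_reflP_sq_orderIso he0 hd hsum hθ, hV2, sqrt_div' _ (sq_nonneg c),
      sqrt_sq hc_pos.le]
    field_simp
  exact ⟨key, fun θ₁ θ₂ h₁ h₂ => by rw [key θ₁ h₁, key θ₂ h₂]⟩
end

section
/- Let f : ℝ → ℝ be real-analytic. If ∫₀^{π/2} f(θ·sin²s) ds = 0 for every θ ∈ ℝ, then f(θ) = 0 for all θ ∈ ℝ (i.e., the operator A(f)(θ) = ∫₀^{π/2} f(θ·sin²s) ds is injective on real-analytic functions). -/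
/-!
Expand `f` in its power series `∑ aₙ xⁿ` at `0`. Integrating termwise, `A f` has the power
series `∑ wₙ aₙ θⁿ` on the same ball, with weights `wₙ = ∫₀^{π/2} sin²ⁿ s ds > 0`. If `A f = 0`
then all `wₙ aₙ` vanish, hence all `aₙ`, so `f` vanishes near `0` and, being analytic on the
connected line, everywhere.
-/

open Real MeasureTheory
open scoped ENNReal Interval Topology

namespace FormalMultilinearSeries

variable {𝕜 E F : Type*} [NontriviallyNormedField 𝕜] [NormedAddCommGroup E] [NormedSpace 𝕜 E]
  [NormedAddCommGroup F] [NormedSpace 𝕜 F]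

theorem radius_le_radius_of_norm_le_mul {p q : FormalMultilinearSeries 𝕜 E F} (C : ℝ)
    (h : ∀ n, ‖q n‖ ≤ C * ‖p n‖) : p.radius ≤ q.radius := by
  refine ENNReal.le_of_forall_nnreal_lt fun r hr => ?_
  obtain ⟨D, -, hD⟩ := p.norm_mul_pow_le_of_lt_radius hr
  refine q.le_radius_of_bound (|C| * D) fun n => ?_
  calc ‖q n‖ * (r : ℝ) ^ n ≤ |C| * ‖p n‖ * (r : ℝ) ^ n := by
        gcongr; exact (h n).trans (by gcongr; exact le_abs_self C)
    _ ≤ |C| * D := by rw [mul_assoc]; gcongr; exact hD n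

end FormalMultilinearSeries

section

variable {E : Type*} [NormedAddCommGroup E] [NormedSpace ℝ E] [CompleteSpace E] {f : ℝ → E}
  {p : FormalMultilinearSeries ℝ ℝ E} {r : ℝ≥0∞} {g : ℝ → ℝ} {a b : ℝ}

theorem HasFPowerSeriesOnBall.hasSum_intervalIntegral_comp_mul
    (hp : HasFPowerSeriesOnBall f p 0 r) (hg : Continuous g) (hg1 : ∀ s ∈ Ι a b, |g s| ≤ 1)
    {y : ℝ} (hy : y ∈ Metric.eball (0 : ℝ) r) :
    HasSum (fun n => (∫ s in a..b, g s ^ n) • p n (fun _ => y)) (∫ s in a..b, f (y * g s)) := by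
  have hterm : ∀ n s, p n (fun _ => y * g s) = g s ^ n • p n (fun _ => y) := fun n s => by
    simpa [mul_comm y] using (p n).map_smul_univ (fun _ => g s) (fun _ => y)
  convert intervalIntegral.hasSum_integral_of_dominated_convergence
    (μ := volume) (F := fun n s => g s ^ n • p n (fun _ => y)) (fun n _ => ‖p n (fun _ => y)‖)
    (fun n => by fun_prop) (fun n => ?_) ?_ intervalIntegrable_const ?_ using 2 with n
  · exact (intervalIntegral.integral_smul_const _ _).symm
  · refine Filter.Eventually.of_forall fun s hs => ?_
    rw [norm_smul, norm_pow, Real.norm_eq_abs]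
    exact mul_le_of_le_one_left (norm_nonneg _) (pow_le_one₀ (abs_nonneg _) (hg1 s hs))
  · exact Filter.Eventually.of_forall fun _ _ =>
      p.summable_norm_apply (Metric.eball_subset_eball hp.r_le hy)
  · refine Filter.Eventually.of_forall fun s hs => ?_
    simp only [← hterm]
    have hmem : y * g s ∈ Metric.eball (0 : ℝ) r := by
      refine mem_eball_zero_iff.2 (lt_of_le_of_lt ?_ (mem_eball_zero_iff.1 hy))
      rw [enorm_le_iff_norm_le, norm_mul]
      exact mul_le_of_le_one_right (norm_nonneg y) (hg1 s hs)
    simpa using hp.hasSum hmem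

theorem HasFPowerSeriesOnBall.intervalIntegral_comp_mul
    (hp : HasFPowerSeriesOnBall f p 0 r) (hg : Continuous g) (hg1 : ∀ s ∈ Ι a b, |g s| ≤ 1) :
    HasFPowerSeriesOnBall (fun y => ∫ s in a..b, f (y * g s))
      (fun n => (∫ s in a..b, g s ^ n) • p n) 0 r where
  r_le := hp.r_le.trans <| p.radius_le_radius_of_norm_le_mul |b - a| fun n => by
    refine (norm_smul_le (∫ s in a..b, g s ^ n) (p n)).trans
      (mul_le_mul_of_nonneg_right ?_ (norm_nonneg _))
    refine (intervalIntegral.norm_integral_le_of_norm_le_const fun s hs => ?_).trans_eq (one_mul _)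
    rw [norm_pow, Real.norm_eq_abs]
    exact pow_le_one₀ (abs_nonneg _) (hg1 s hs)
  r_pos := hp.r_pos
  hasSum hy := by simpa using hp.hasSum_intervalIntegral_comp_mul hg hg1 hy

end

theorem integral_sin_sq_pow_pos (n : ℕ) : 0 < ∫ s in (0 : ℝ)..(π / 2), (sin s ^ 2) ^ n := by
  refine intervalIntegral.intervalIntegral_pos_of_pos_on
    ((by fun_prop : Continuous fun s => (sin s ^ 2) ^ n).intervalIntegrable _ _) (fun s hs => ?_)
    (by positivity)
  have := sin_pos_of_pos_of_lt_pi hs.1 (hs.2.trans (by linarith [pi_pos]))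
  positivity

/-- the operator `A(f)(θ) = ∫₀^{π/2} f(θ sin²s) ds` is injective on
real-analytic functions. -/
theorem stmt12 (f : ℝ → ℝ) (hf : ∀ x : ℝ, AnalyticAt ℝ f x)
    (h : ∀ θ : ℝ, (∫ s in (0:ℝ)..(Real.pi/2), f (θ * Real.sin s ^ 2)) = 0) :
    ∀ θ : ℝ, f θ = 0 := by
  obtain ⟨p, r, hp⟩ := hf 0
  have hA := hp.intervalIntegral_comp_mul (a := 0) (b := π / 2) (g := fun s => sin s ^ 2)
    (by fun_prop) fun s _ => by rw [abs_of_nonneg (sq_nonneg _)]; exact sin_sq_le_one s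
  simp only [h] at hA
  have hp0 : p = 0 := funext fun n =>
    (smul_eq_zero.1 (congr_fun hA.hasFPowerSeriesAt.eq_zero n)).resolve_left
      (integral_sin_sq_pow_pos n).ne'
  have hf0 : f =ᶠ[𝓝 0] 0 := (hp0 ▸ hp).eventually_eq_zero
  exact fun θ => AnalyticOnNhd.eqOn_zero_of_preconnected_of_eventuallyEq_zero (fun x _ => hf x)
    isPreconnected_univ (Set.mem_univ 0) hf0 (Set.mem_univ θ)
end

section
/- Let V be a UM-potential with deg(V,0) = 2 and W = (V_*)⁻¹ as above. Let γ ≥ 0 and γ̄ ≥ 0, not both zero, and define U(x) = γ·W'(x) + γ̄·W'(−x); one has γ·a(θ) + γ̄·ā(θ) = (1/√2)·∫₀¹ U(√θ·s)/√(1−s²) ds for every θ > 0. Suppose the function θ ↦ γ·a(θ) + γ̄·ā(θ) on (0,∞) admits a real-analytic extension to an open neighborhood of [0,∞). Then U is an even function; if, in addition, V is not even, then γ = γ̄. -/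
/-!
The substitution `y = W (√θ s)` turns `a(θ)` into `(1/√2) ∫₀¹ W'(√θ s) / √(1 - s²) ds`, and `ā(θ)`
into the same integral of `W'(-·)`, so `√2 (γ a + γ̄ ā)(t²) = T U t` for the arcsine transform
`T U t = ∫₀¹ U(t s) / √(1 - s²) ds`. Integrating termwise, `T` multiplies the `n`-th Taylor
coefficient of `U` at `0` by the positive moment `∫₀¹ sⁿ / √(1 - s²) ds`. If `γ a + γ̄ ā` extends
analytically across `0`, then `T U` is analytic at `0` and a function of `t²` for `t > 0`, hence
even near `0`; so the odd Taylor coefficients of `U` vanish and `U` is even by the identity theorem.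
If `γ ≠ γ̄`, evenness of `U` makes `W'` even, hence `W` and `V_*` odd and `V = V_*²` even.
-/

open MeasureTheory Set Filter Topology
open scoped NNReal ENNReal

theorem integrableOn_div_sqrt_one_sub_sq {F : ℝ → ℝ} (hF : Continuous F) :
    IntegrableOn (fun s => F s / √(1 - s ^ 2)) (Ioo 0 1) := by
  have hweight : IntegrableOn (fun s : ℝ => 1 / √(1 - s ^ 2)) (Ioc 0 1) :=
    intervalIntegral.integrableOn_deriv_of_nonneg Real.continuous_arcsin.continuousOn
      (fun x hx => Real.hasDerivAt_arcsin (by linarith [hx.1]) hx.2.ne) (fun x _ => by positivity)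
  obtain ⟨C, hC⟩ := (isCompact_Icc (a := (0 : ℝ)) (b := 1)).exists_bound_of_continuousOn
    hF.continuousOn
  have h := (hweight.mono_set Ioo_subset_Ioc_self).bdd_mul hF.aestronglyMeasurable.restrict
    ((ae_restrict_iff' measurableSet_Ioo).2 (ae_of_all _ fun x hx =>
      hC x (Ioo_subset_Icc_self hx)))
  simpa only [IntegrableOn, mul_one_div] using h

theorem intervalIntegrable_div_sqrt_one_sub_sq {F : ℝ → ℝ} (hF : Continuous F) :
    IntervalIntegrable (fun s => F s / √(1 - s ^ 2)) volume 0 1 :=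
  (intervalIntegrable_iff_integrableOn_Ioo_of_le zero_le_one).2
    (integrableOn_div_sqrt_one_sub_sq hF)

noncomputable def arcsineMoment (n : ℕ) : ℝ := ∫ s in Ioo (0 : ℝ) 1, s ^ n / √(1 - s ^ 2)

theorem arcsineMoment_pos (n : ℕ) : 0 < arcsineMoment n := by
  have h := intervalIntegral.intervalIntegral_pos_of_pos_on
    (intervalIntegrable_div_sqrt_one_sub_sq (continuous_pow n))
    (fun s hs => div_pos (pow_pos hs.1 n) (Real.sqrt_pos.2 (by nlinarith [hs.1, hs.2]))) one_pos
  rwa [intervalIntegral.integral_of_le zero_le_one, integral_Ioc_eq_integral_Ioo] at h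

theorem arcsineMoment_le_arcsineMoment_zero (n : ℕ) : arcsineMoment n ≤ arcsineMoment 0 := by
  refine setIntegral_mono_on (integrableOn_div_sqrt_one_sub_sq (continuous_pow n))
    (integrableOn_div_sqrt_one_sub_sq (continuous_pow 0)) measurableSet_Ioo fun s hs => ?_
  rw [pow_zero]
  exact div_le_div_of_nonneg_right (pow_le_one₀ hs.1.le hs.2.le) (Real.sqrt_nonneg _)

noncomputable def arcsineTransform (F : ℝ → ℝ) (t : ℝ) : ℝ :=
  ∫ s in (0 : ℝ)..1, F (t * s) / √(1 - s ^ 2)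

theorem arcsineTransform_mul_add_mul {F G : ℝ → ℝ} (hF : Continuous F) (hG : Continuous G)
    (a b t : ℝ) :
    arcsineTransform (fun x => a * F x + b * G x) t =
      a * arcsineTransform F t + b * arcsineTransform G t := by
  have hint {H : ℝ → ℝ} (hH : Continuous H) (c : ℝ) :
      IntervalIntegrable (fun s => c * (H (t * s) / √(1 - s ^ 2))) volume 0 1 :=
    (intervalIntegrable_div_sqrt_one_sub_sq (hH.comp (continuous_const_mul t))).const_mul c
  simp only [arcsineTransform]
  rw [← intervalIntegral.integral_const_mul,
    ← intervalIntegral.integral_const_mul, ← intervalIntegral.integral_add (hint hF a) (hint hG b)]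
  congr 1 with s
  ring

theorem arcsineTransform_comp_neg (F : ℝ → ℝ) (t : ℝ) :
    arcsineTransform (fun x => F (-x)) t = arcsineTransform F (-t) := by
  simp only [arcsineTransform, neg_mul]

theorem norm_coeff_mul_arcsineMoment_le (p : FormalMultilinearSeries ℝ ℝ ℝ) (n : ℕ) :
    ‖p.coeff n * arcsineMoment n‖ ≤ arcsineMoment 0 * ‖p n‖ := by
  rw [norm_mul, Real.norm_of_nonneg (arcsineMoment_pos n).le, p.norm_apply_eq_norm_coef, mul_comm]
  exact mul_le_mul_of_nonneg_right (arcsineMoment_le_arcsineMoment_zero n) (norm_nonneg _)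

theorem radius_le_radius_ofScalars_coeff_mul_arcsineMoment (p : FormalMultilinearSeries ℝ ℝ ℝ) :
    p.radius ≤
      (FormalMultilinearSeries.ofScalars ℝ fun n => p.coeff n * arcsineMoment n).radius := by
  refine ENNReal.le_of_forall_nnreal_lt fun r hr => ?_
  obtain ⟨C, -, hC⟩ := p.norm_mul_pow_le_of_lt_radius hr
  refine FormalMultilinearSeries.le_radius_of_bound _ (arcsineMoment 0 * C) fun n => ?_
  rw [FormalMultilinearSeries.ofScalars_norm]
  calc ‖p.coeff n * arcsineMoment n‖ * r ^ n ≤ arcsineMoment 0 * (‖p n‖ * r ^ n) := by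
        rw [← mul_assoc]
        gcongr
        exact norm_coeff_mul_arcsineMoment_le p n
    _ ≤ arcsineMoment 0 * C := by gcongr; exacts [(arcsineMoment_pos 0).le, hC n]

theorem hasSum_arcsineTransform {F : ℝ → ℝ} {p : FormalMultilinearSeries ℝ ℝ ℝ} {R : ℝ≥0∞}
    (hF : HasFPowerSeriesOnBall F p 0 R) {y : ℝ} (hy : y ∈ Metric.eball (0 : ℝ) R) :
    HasSum (fun n => p.coeff n * arcsineMoment n * y ^ n) (arcsineTransform F y) := by
  have hyR : (‖y‖₊ : ℝ≥0∞) < p.radius := by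
    refine lt_of_lt_of_le ?_ hF.r_le
    simpa [Metric.mem_eball, edist_zero_right, enorm_eq_nnnorm] using hy
  set G : ℕ → ℝ → ℝ := fun n s => p.coeff n * y ^ n * (s ^ n / √(1 - s ^ 2)) with hG
  have hG_int (n : ℕ) : Integrable (G n) (volume.restrict (Ioo 0 1)) :=
    (integrableOn_div_sqrt_one_sub_sq (continuous_pow n)).const_mul _
  have hG_norm (n : ℕ) :
      ∫ s in Ioo 0 1, ‖G n s‖ = ‖p.coeff n * arcsineMoment n‖ * ‖y‖ ^ n := by
    rw [norm_mul, Real.norm_of_nonneg (arcsineMoment_pos n).le, arcsineMoment,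
      ← integral_const_mul, ← integral_mul_const]
    refine setIntegral_congr_fun measurableSet_Ioo fun s hs => ?_
    rw [norm_mul, norm_mul, norm_pow,
      Real.norm_of_nonneg (div_nonneg (pow_nonneg hs.1.le n) (Real.sqrt_nonneg _))]
    ring
  have hG_sum : Summable fun n => ∫ s in Ioo 0 1, ‖G n s‖ := by
    refine ((p.summable_norm_mul_pow hyR).mul_left (arcsineMoment 0)).of_nonneg_of_le
      (fun n => integral_nonneg fun s => norm_nonneg _) fun n => ?_
    rw [hG_norm, coe_nnnorm, ← mul_assoc]
    gcongr
    exact norm_coeff_mul_arcsineMoment_le p n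
  have hG_tsum : EqOn (fun s => ∑' n, G n s) (fun s => F (y * s) / √(1 - s ^ 2)) (Ioo 0 1) := by
    intro s hs
    have hys : y * s ∈ Metric.eball (0 : ℝ) R := by
      rw [Metric.mem_eball, edist_zero_right] at hy ⊢
      refine lt_of_le_of_lt ?_ hy
      rw [enorm_mul]
      refine mul_le_of_le_one_right' ?_
      rw [← ofReal_norm, Real.norm_of_nonneg hs.1.le]
      exact ENNReal.ofReal_le_one.2 hs.2.le
    have h := ((hF.hasSum hys).div_const (√(1 - s ^ 2))).tsum_eq
    rw [zero_add] at h
    refine Eq.trans (tsum_congr fun n => ?_) h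
    rw [p.apply_eq_pow_smul_coeff, smul_eq_mul, hG]
    ring
  rw [arcsineTransform, intervalIntegral.integral_of_le zero_le_one,
    integral_Ioc_eq_integral_Ioo, ← setIntegral_congr_fun measurableSet_Ioo hG_tsum]
  refine (hasSum_integral_of_summable_integral_norm hG_int hG_sum).congr_fun fun n => ?_
  rw [integral_const_mul, arcsineMoment]
  ring

theorem hasFPowerSeriesOnBall_arcsineTransform {F : ℝ → ℝ} {p : FormalMultilinearSeries ℝ ℝ ℝ}
    {R : ℝ≥0∞} (hF : HasFPowerSeriesOnBall F p 0 R) :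
    HasFPowerSeriesOnBall (arcsineTransform F)
      (FormalMultilinearSeries.ofScalars ℝ fun n => p.coeff n * arcsineMoment n) 0 R where
  r_le := hF.r_le.trans (radius_le_radius_ofScalars_coeff_mul_arcsineMoment p)
  r_pos := hF.r_pos
  hasSum hy := by
    simpa [FormalMultilinearSeries.ofScalars_apply_eq, mul_comm] using hasSum_arcsineTransform hF hy

theorem AnalyticAt.arcsineTransform {F : ℝ → ℝ} (hF : AnalyticAt ℝ F 0) :
    AnalyticAt ℝ (arcsineTransform F) 0 :=
  let ⟨_, _, hp⟩ := hF
  (hasFPowerSeriesOnBall_arcsineTransform hp).analyticAt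

theorem eventuallyEq_zero_of_arcsineTransform {F : ℝ → ℝ} (hF : AnalyticAt ℝ F 0)
    (h : arcsineTransform F =ᶠ[𝓝 0] 0) : F =ᶠ[𝓝 0] 0 := by
  obtain ⟨p, R, hp⟩ := hF
  have hq := (hasFPowerSeriesOnBall_arcsineTransform hp).hasFPowerSeriesAt.eq_zero_of_eventually h
  rw [FormalMultilinearSeries.ofScalars_series_eq_zero] at hq
  have hp0 : p = 0 := by
    refine funext fun n => ?_
    show p n = 0
    rw [← p.coeff_eq_zero]
    exact (mul_eq_zero.1 (congr_fun hq n)).resolve_right (arcsineMoment_pos n).ne'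
  exact (hp0 ▸ hp).eventually_eq_zero

theorem even_of_arcsineTransform_eventually_even {U : ℝ → ℝ} (hU : AnalyticOnNhd ℝ U univ)
    (h : ∀ᶠ t in 𝓝 0, arcsineTransform U (-t) = arcsineTransform U t) : U.Even := by
  have hUneg : AnalyticOnNhd ℝ (fun x => U (-x)) univ := fun x _ =>
    (hU (-x) trivial).comp analyticAt_id.neg
  have hUc : Continuous U := continuousOn_univ.1 hU.continuousOn
  have hUnegc : Continuous fun x => U (-x) := hUc.comp continuous_neg
  have hodd : arcsineTransform (fun x => 1 * U x + -1 * U (-x)) =ᶠ[𝓝 0] 0 := by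
    filter_upwards [h] with t ht
    rw [arcsineTransform_mul_add_mul hUc hUnegc, arcsineTransform_comp_neg, ht,
      Pi.zero_apply]
    ring
  have hzero := eventuallyEq_zero_of_arcsineTransform
    ((analyticAt_const.mul (hU 0 trivial)).add (analyticAt_const.mul (hUneg 0 trivial))) hodd
  have heq : U =ᶠ[𝓝 0] fun x => U (-x) := hzero.mono fun x (hx : 1 * U x + -1 * U (-x) = 0) => by
    show U x = U (-x)
    linarith
  exact fun x => (congr_fun (hU.eq_of_eventuallyEq hUneg heq) x).symm

theorem eventually_even_of_eq_comp_sq {f g : ℝ → ℝ} (hf : AnalyticAt ℝ f 0)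
    (hg : AnalyticAt ℝ g 0) (hfg : ∀ t, 0 < t → f t = g (t ^ 2)) :
    ∀ᶠ t in 𝓝 0, f (-t) = f t := by
  have hg2 : AnalyticAt ℝ (fun t => g (t ^ 2)) 0 :=
    AnalyticAt.comp (by simpa using hg) (analyticAt_id.pow 2)
  have hev : ∀ᶠ t in 𝓝 0, f t = g (t ^ 2) :=
    (hf.frequently_eq_iff_eventually_eq hg2).1 <|
      (eventually_nhdsWithin_of_forall (s := Ioi 0) hfg).frequently.filter_mono
        (nhdsWithin_mono _ fun t (ht : 0 < t) => ht.ne')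
  filter_upwards [hev, (continuous_neg.tendsto' 0 0 neg_zero).eventually hev] with t h1 h2
  rw [h1, h2, neg_sq]

theorem Vinv_eq_of_comp_eq_sq {V W : ℝ → ℝ} (hW : StrictMono W) (hsurj : W.Surjective)
    (hW0 : W 0 = 0) (hVW : ∀ x, V (W x) = x ^ 2) {θ : ℝ} (hθ : 0 ≤ θ) :
    Vinv V θ = W √θ := by
  have hset : {y | 0 ≤ y ∧ V y ≤ θ} = Icc 0 (W √θ) := by
    ext y
    obtain ⟨x, rfl⟩ := hsurj y
    have hx0 : 0 ≤ W x ↔ 0 ≤ x := by simpa only [hW0] using hW.le_iff_le (a := 0) (b := x)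
    simp only [mem_ofPred_eq, mem_Icc, hVW, hx0, hW.le_iff_le]
    exact and_congr_right fun hx => (Real.le_sqrt hx hθ).symm
  rw [Vinv, hset, csSup_Icc (hW0 ▸ hW.monotone (Real.sqrt_nonneg θ))]

theorem aFun_eq_arcsineTransform {V W W' : ℝ → ℝ} (hW : StrictMono W) (hsurj : W.Surjective)
    (hW0 : W 0 = 0) (hVW : ∀ x, V (W x) = x ^ 2) (hW' : ∀ x, HasDerivAt W (W' x) x) {θ : ℝ}
    (hθ : 0 < θ) : aFun V θ = arcsineTransform W' √θ / √2 := by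
  set c := √θ with hc_def
  have hc : 0 < c := Real.sqrt_pos.2 hθ
  have hWc : Continuous W := continuous_iff_continuousAt.2 fun x => (hW' x).continuousAt
  have hderiv (s : ℝ) : HasDerivAt (fun s => W (c * s)) (c * W' (c * s)) s :=
    ((hW' (c * s)).comp s ((hasDerivAt_id' s).const_mul c)).congr_deriv (by ring)
  have hsubst := intervalIntegral.integral_comp_mul_deriv_of_deriv_nonneg (a := 0) (b := 1)
    (g := fun y => 1 / (√2 * √(θ - V y))) (hWc.comp (continuous_const_mul c)).continuousOn
    (fun s _ => hderiv s) (fun s _ => (hderiv s).nonneg_of_monotone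
      fun a b hab => hW.monotone (mul_le_mul_of_nonneg_left hab hc.le))
  simp only [Function.comp_apply, mul_zero, mul_one, hW0] at hsubst
  rw [aFun, Vinv_eq_of_comp_eq_sq hW hsurj hW0 hVW hθ.le, ← hsubst, arcsineTransform,
    ← intervalIntegral.integral_div]
  refine intervalIntegral.integral_congr fun s _ => ?_
  have hθs : θ - V (W (c * s)) = θ * (1 - s ^ 2) := by
    rw [hVW, mul_pow, Real.sq_sqrt hθ.le]
    ring
  rw [hθs, Real.sqrt_mul hθ.le, ← hc_def]
  -- at `s = 1` both integrands are `0`, by `x / 0 = 0`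
  rcases eq_or_ne (√(1 - s ^ 2)) 0 with h | h
  · simp [h]
  · field_simp

theorem aFun_reflP_eq_arcsineTransform {V W W' : ℝ → ℝ} (hW : StrictMono W)
    (hsurj : W.Surjective) (hW0 : W 0 = 0) (hVW : ∀ x, V (W x) = x ^ 2)
    (hW' : ∀ x, HasDerivAt W (W' x) x) {θ : ℝ} (hθ : 0 < θ) :
    aFun (reflP V) θ = arcsineTransform (fun x => W' (-x)) √θ / √2 :=
  aFun_eq_arcsineTransform (W := fun x => -W (-x)) (fun _ _ h => neg_lt_neg (hW (neg_lt_neg h)))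
    (fun y => let ⟨x, hx⟩ := hsurj (-y); ⟨-x, by simp [hx]⟩) (by simp [hW0])
    (fun x => by simp [reflP, hVW])
    (fun x => ((hW' (-x)).comp x (hasDerivAt_neg x)).neg.congr_deriv (by ring)) hθ

theorem Function.Odd.of_deriv_even {f : ℝ → ℝ} (hf : Differentiable ℝ f) (hf' : (deriv f).Even)
    (h0 : f 0 = 0) : f.Odd := by
  have hsum : Differentiable ℝ fun x => f x + f (-x) := hf.add (hf.comp differentiable_neg)
  have hsum' (x : ℝ) : deriv (fun x => f x + f (-x)) x = 0 := by
    refine ((hf x).hasDerivAt.add ((hf (-x)).hasDerivAt.comp x (hasDerivAt_neg x))).deriv.trans ?_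
    rw [hf' x]
    ring
  intro x
  have := is_const_of_deriv_eq_zero hsum hsum' x 0
  rw [neg_zero, h0, add_zero] at this
  linarith

theorem Function.Even.of_sq_eq_of_leftInverse_odd {V Vstar W : ℝ → ℝ} (hW : W.Odd)
    (hWinj : W.Injective) (hinv : ∀ x, W (Vstar x) = x) (hroot : ∀ x, Vstar x ^ 2 = V x) :
    V.Even := by
  intro x
  have hVstar : Vstar (-x) = -Vstar x := hWinj (by rw [hinv, hW, hinv])
  rw [← hroot, ← hroot, hVstar, neg_sq]

theorem stmt13_general (V Vstar W : ℝ → ℝ) (hV : IsUM V)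
    (hW : ∀ x : ℝ, AnalyticAt ℝ W x)
    (hmono : StrictMono Vstar) (hbij : Function.Bijective Vstar)
    (hinv : ∀ x : ℝ, W (Vstar x) = x) (hroot : ∀ x : ℝ, Vstar x ^ 2 = V x)
    (γ γb : ℝ)
    (hext : ∃ (g : ℝ → ℝ) (O : Set ℝ), IsOpen O ∧ Set.Ici (0:ℝ) ⊆ O ∧
      (∀ x ∈ O, AnalyticAt ℝ g x) ∧
      ∀ θ : ℝ, 0 < θ → g θ = γ * aFun V θ + γb * aFun (reflP V) θ) :
    (∀ θ : ℝ, 0 < θ →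
      γ * aFun V θ + γb * aFun (reflP V) θ =
        (1 / Real.sqrt 2) * ∫ s in (0:ℝ)..1,
          (γ * deriv W (Real.sqrt θ * s) + γb * deriv W (-(Real.sqrt θ * s))) /
            Real.sqrt (1 - s ^ 2)) ∧
    (∀ x : ℝ, γ * deriv W (-x) + γb * deriv W x = γ * deriv W x + γb * deriv W (-x)) ∧
    ((∃ x : ℝ, V (-x) ≠ V x) → γ = γb) := by
  have hVsW (y : ℝ) : Vstar (W y) = y := by
    obtain ⟨x, rfl⟩ := hbij.2 y
    rw [hinv]
  have hWmono : StrictMono W := fun a b hab => hmono.lt_iff_lt.1 (by rwa [hVsW, hVsW])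
  have hWsurj : W.Surjective := fun y => ⟨Vstar y, hinv y⟩
  have hVs0 : Vstar 0 = 0 := pow_eq_zero_iff two_ne_zero |>.1 ((hroot 0).trans hV.zero)
  have hW0 : W 0 = 0 := by simpa [hVs0] using hinv 0
  have hVW (x : ℝ) : V (W x) = x ^ 2 := by rw [← hroot, hVsW]
  have hW' (x : ℝ) : HasDerivAt W (deriv W x) x := (hW x).differentiableAt.hasDerivAt
  have hdW : AnalyticOnNhd ℝ (deriv W) univ := AnalyticOnNhd.deriv fun x _ => hW x
  have hdWc : Continuous (deriv W) := continuousOn_univ.1 hdW.continuousOn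
  have hdWnegc : Continuous fun x => deriv W (-x) := hdWc.comp continuous_neg
  set U : ℝ → ℝ := fun x => γ * deriv W x + γb * deriv W (-x) with hU
  have hA (θ : ℝ) (hθ : 0 < θ) :
      γ * aFun V θ + γb * aFun (reflP V) θ = arcsineTransform U √θ / √2 := by
    rw [aFun_eq_arcsineTransform hWmono hWsurj hW0 hVW hW' hθ,
      aFun_reflP_eq_arcsineTransform hWmono hWsurj hW0 hVW hW' hθ,
      hU, arcsineTransform_mul_add_mul hdWc hdWnegc]
    ring
  have hUeven : U.Even := by
    obtain ⟨g, O, -, hO, hg, hgA⟩ := hext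
    have hUan : AnalyticOnNhd ℝ U univ := fun x _ =>
      (analyticAt_const.mul (hdW x trivial)).add
        (analyticAt_const.mul ((hdW (-x) trivial).comp analyticAt_id.neg))
    refine even_of_arcsineTransform_eventually_even hUan <|
      eventually_even_of_eq_comp_sq (g := fun θ => √2 * g θ) (hUan 0 trivial).arcsineTransform
        (analyticAt_const.mul (hg 0 (hO self_mem_Ici))) fun t ht => ?_
    rw [hgA _ (by positivity), hA _ (by positivity), Real.sqrt_sq ht.le]
    field_simp
  refine ⟨fun θ hθ => by rw [hA θ hθ, div_eq_inv_mul, one_div]; rfl,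
    fun x => by simpa [hU] using hUeven x, fun ⟨x, hx⟩ => ?_⟩
  by_contra hne
  have hdWeven : (deriv W).Even := fun x => by
    have := hUeven x
    simp only [hU, neg_neg] at this
    have : (γ - γb) * (deriv W (-x) - deriv W x) = 0 := by linarith
    exact sub_eq_zero.1 ((mul_eq_zero.1 this).resolve_left (sub_ne_zero.2 hne))
  exact hx (Function.Even.of_sq_eq_of_leftInverse_odd
    (Function.Odd.of_deriv_even (fun x => (hW' x).differentiableAt) hdWeven hW0)
    hWmono.injective hinv hroot x)

/-- the identity `γ a + γ̄ ā = (1/√2)∫₀¹ U(√θ s)/√(1-s²) ds` for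
`U(x) = γ W'(x) + γ̄ W'(-x)`; if `γ a + γ̄ ā` extends analytically to a neighborhood of
`[0,∞)`, then `U` is even, and if moreover `V` is not even, then `γ = γ̄`. -/
theorem stmt13 (V Vstar W : ℝ → ℝ) (hV : IsUM V) (hdeg : degAt0 V = 2)
    (hVs : ∀ x : ℝ, AnalyticAt ℝ Vstar x) (hW : ∀ x : ℝ, AnalyticAt ℝ W x)
    (hmono : StrictMono Vstar) (hbij : Function.Bijective Vstar)
    (hinv : ∀ x : ℝ, W (Vstar x) = x) (hroot : ∀ x : ℝ, Vstar x ^ 2 = V x)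
    (γ γb : ℝ) (hγ : 0 ≤ γ) (hγb : 0 ≤ γb) (hnz : ¬(γ = 0 ∧ γb = 0))
    (hext : ∃ (g : ℝ → ℝ) (O : Set ℝ), IsOpen O ∧ Set.Ici (0:ℝ) ⊆ O ∧
      (∀ x ∈ O, AnalyticAt ℝ g x) ∧
      ∀ θ : ℝ, 0 < θ → g θ = γ * aFun V θ + γb * aFun (reflP V) θ) :
    (∀ θ : ℝ, 0 < θ →
      γ * aFun V θ + γb * aFun (reflP V) θ =
        (1 / Real.sqrt 2) * ∫ s in (0:ℝ)..1,
          (γ * deriv W (Real.sqrt θ * s) + γb * deriv W (-(Real.sqrt θ * s))) /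
            Real.sqrt (1 - s ^ 2)) ∧
    (∀ x : ℝ, γ * deriv W (-x) + γb * deriv W x = γ * deriv W x + γb * deriv W (-x)) ∧
    ((∃ x : ℝ, V (-x) ≠ V x) → γ = γb) :=
  stmt13_general V Vstar W hV hW hmono hbij hinv hroot γ γb hext
end

section
/- For every E > 0 there exist UM-potentials V₁, V₂ with deg(V₁,0) = deg(V₂,0) = 2 such that: V₁ and V₂ are even functions; neither V₁ nor V₂ is a quadratic function (i.e., neither is of the form x ↦ α·x² for a constant α); a(θ) = b_E(θ) for every θ ∈ (0,E); and, moreover, V₁ and V₂ can be chosen so that in addition √(V₂''(0)/V₁''(0)) is irrational. -/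
/-!
If `e : ℝ ≃o ℝ` is analytic with `e 0 = 0` and `e' ≠ 0`, the potential `V = (e⁻¹)²` is a
UM-potential with `V (e t) = t²` and `V''(0) = 2 / e'(0)²`, and the substitution
`y = e (√θ sin u)` gives `a(θ) = (1/√2) ∫₀^{π/2} e'(√θ sin u) du`. For the odd quintic `e` with
`e' = 2 (p₀ + p₁ t² + p₂ t⁴)` (positive when `p₂ > 0` and `p₁² < 4 p₀ p₂`) this is the quadratic
polynomial `π/√2 · (p₀ + p₁ θ/2 + 3 p₂ θ²/8)`, and `V''(0) = 1 / (2 p₀²)`. Matching the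
coefficients of `a₁(θ)` and `a₂(E - θ)` still allows `p₀ = 1 - √2/4` for `V₁` and `p₀ = 1` for
`V₂`, so that `√(V₂''(0) / V₁''(0)) = 1 - √2/4`; the quintic term keeps both potentials
non-quadratic.
-/

open Real Set Filter MeasureTheory intervalIntegral

lemma degAt0_eq_two {V : ℝ → ℝ} (h₁ : deriv V 0 = 0) (h₂ : iteratedDeriv 2 V 0 ≠ 0) :
    degAt0 V = 2 := by
  have hmem : 2 ∈ {m : ℕ | 1 ≤ m ∧ iteratedDeriv m V 0 ≠ 0} := ⟨one_le_two, h₂⟩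
  refine le_antisymm (Nat.sInf_le hmem) (le_csInf ⟨2, hmem⟩ ?_)
  rintro m ⟨hm, hm'⟩
  by_contra! hlt
  obtain rfl : m = 1 := by omega
  exact hm' (by rwa [iteratedDeriv_one])

lemma surjective_of_le_deriv {f : ℝ → ℝ} {C : ℝ} (hC : 0 < C) (hf : Differentiable ℝ f)
    (hf' : ∀ x, C ≤ deriv f x) : Function.Surjective f := by
  have lower : ∀ x, 0 ≤ x → f 0 + C * x ≤ f x := fun x hx => by
    linarith [mul_sub_le_image_sub_of_le_deriv hf hf' hx]
  have upper : ∀ x, x ≤ 0 → f x ≤ f 0 + C * x := fun x hx => by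
    linarith [mul_sub_le_image_sub_of_le_deriv hf hf' hx]
  refine hf.continuous.surjective ?_ ?_
  · refine tendsto_atTop_mono' _ ?_
      (tendsto_atTop_add_const_left _ (f 0) (tendsto_id.const_mul_atTop hC))
    filter_upwards [eventually_ge_atTop 0] with x hx using lower x hx
  · refine tendsto_atBot_mono' _ ?_
      (tendsto_atBot_add_const_left _ (f 0) (tendsto_id.const_mul_atBot hC))
    filter_upwards [eventually_le_atBot 0] with x hx using upper x hx

noncomputable def orderIsoOfLeDeriv {f : ℝ → ℝ} {C : ℝ} (hC : 0 < C) (hf : Differentiable ℝ f)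
    (hf' : ∀ x, C ≤ deriv f x) : ℝ ≃o ℝ :=
  StrictMono.orderIsoOfSurjective f (strictMono_of_deriv_pos fun x => hC.trans_le (hf' x))
    (surjective_of_le_deriv hC hf hf')

/-- In the notation of the class `IsSP`, `potentialOf e` is the potential `V = V⋆ ^ 2` with
`V⋆ = e.symm` and `W = e`. -/
def potentialOf (e : ℝ ≃o ℝ) : ℝ → ℝ := fun y => e.symm y ^ 2

namespace potentialOf

variable (e : ℝ ≃o ℝ)

lemma apply_apply (t : ℝ) : potentialOf e (e t) = t ^ 2 := by
  simp [potentialOf]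

lemma even (hodd : ∀ t, e (-t) = -e t) (y : ℝ) : potentialOf e (-y) = potentialOf e y := by
  have : e.symm (-y) = -e.symm y := e.symm_apply_eq.mpr (by rw [hodd, e.apply_symm_apply])
  simp [potentialOf, this]

variable {e}

lemma symm_zero (h₀ : e 0 = 0) : e.symm 0 = 0 := e.symm_apply_eq.mpr h₀.symm

lemma mul_symm_pos (h₀ : e 0 = 0) {y : ℝ} (hy : y ≠ 0) : 0 < y * e.symm y := by
  rcases hy.lt_or_gt with hy | hy
  · exact mul_pos_of_neg_of_neg hy (symm_zero h₀ ▸ e.symm.strictMono hy)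
  · exact mul_pos hy (symm_zero h₀ ▸ e.symm.strictMono hy)

lemma Vinv_eq (h₀ : e 0 = 0) {θ : ℝ} (hθ : 0 ≤ θ) : Vinv (potentialOf e) θ = e √θ := by
  have hset : {y | 0 ≤ y ∧ potentialOf e y ≤ θ} = Icc 0 (e √θ) := by
    ext y
    simp only [mem_ofPred_eq, mem_Icc, potentialOf, and_congr_right_iff]
    intro hy
    have : 0 ≤ e.symm y := symm_zero h₀ ▸ e.symm.monotone hy
    rw [← Real.le_sqrt this hθ, e.symm_apply_le]
  rw [Vinv, hset, csSup_Icc (h₀ ▸ e.monotone (Real.sqrt_nonneg θ))]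

lemma hasDerivAt_symm {e' y : ℝ} (hd : HasDerivAt e e' (e.symm y)) (he' : e' ≠ 0) :
    HasDerivAt e.symm e'⁻¹ y :=
  hd.of_local_left_inverse e.symm.continuous.continuousAt he'
    (Eventually.of_forall e.apply_symm_apply)

lemma analyticAt_symm {e' y : ℝ} (ha : AnalyticAt ℝ e (e.symm y))
    (hd : HasDerivAt e e' (e.symm y)) (he' : e' ≠ 0) : AnalyticAt ℝ e.symm y :=
  e.toHomeomorph.toOpenPartialHomeomorph.analyticAt_symm (a := y) trivial ha
    (hd.hasFDerivAt_equiv he').fderiv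


lemma hasDerivAt (he : Differentiable ℝ e) {y : ℝ} (hd : deriv e (e.symm y) ≠ 0) :
    HasDerivAt (potentialOf e) (2 * e.symm y / deriv e (e.symm y)) y :=
  ((hasDerivAt_symm (he _).hasDerivAt hd).fun_pow 2).congr_deriv (by norm_num; ring)

lemma iteratedDeriv_two (ha : ∀ t, AnalyticAt ℝ e t) (hd : ∀ t, deriv e t ≠ 0)
    (h₀ : e 0 = 0) : iteratedDeriv 2 (potentialOf e) 0 = 2 / deriv e 0 ^ 2 := by
  have he : Differentiable ℝ e := fun t => (ha t).differentiableAt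
  have hderiv : deriv (potentialOf e) = fun y => 2 * e.symm y / deriv e (e.symm y) :=
    funext fun y => (hasDerivAt he (hd _)).deriv
  have hsymm := hasDerivAt_symm (he (e.symm 0)).hasDerivAt (hd _)
  have hquot : HasDerivAt (fun y => 2 * e.symm y / deriv e (e.symm y)) _ 0 :=
    (hsymm.const_mul 2).div (((ha _).deriv.differentiableAt.hasDerivAt).comp 0 hsymm) (hd _)
  rw [iteratedDeriv_succ, iteratedDeriv_one, hderiv, hquot.deriv, symm_zero h₀]
  field_simp [hd 0]
  ring

lemma isUM (ha : ∀ t, AnalyticAt ℝ e t) (hd : ∀ t, deriv e t ≠ 0) (h₀ : e 0 = 0) :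
    IsUM (potentialOf e) where
  analytic y := (analyticAt_symm (ha _) (ha _).differentiableAt.hasDerivAt (hd _)).pow 2
  nonneg y := sq_nonneg _
  zero := by simp [potentialOf, symm_zero h₀]
  deriv_pos y hy := by
    have hpos : 0 < deriv e (e.symm y) := (e.monotone.deriv_nonneg).lt_of_ne' (hd _)
    rw [(hasDerivAt (fun t => (ha t).differentiableAt) (hd _)).deriv, mul_div_assoc',
      ← mul_assoc, mul_comm y 2, mul_assoc]
    exact div_pos (mul_pos two_pos (mul_symm_pos h₀ hy)) hpos
  tendsto_top := (tendsto_pow_atTop two_ne_zero).comp e.symm.tendsto_atTop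
  tendsto_bot := by
    have : potentialOf e = (fun x => x ^ 2) ∘ (fun x => -x) ∘ e.symm := by
      funext y; simp [potentialOf]
    rw [this]
    exact (tendsto_pow_atTop two_ne_zero).comp (tendsto_neg_atBot_atTop.comp e.symm.tendsto_atBot)

lemma degAt0_eq (ha : ∀ t, AnalyticAt ℝ e t) (hd : ∀ t, deriv e t ≠ 0) (h₀ : e 0 = 0) :
    degAt0 (potentialOf e) = 2 := by
  refine degAt0_eq_two ?_ ?_
  · rw [(hasDerivAt (fun t => (ha t).differentiableAt) (hd _)).deriv, symm_zero h₀]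
    simp
  · rw [iteratedDeriv_two ha hd h₀]
    exact div_ne_zero two_ne_zero (pow_ne_zero 2 (hd 0))

/-- The substitution `y = e (√θ sin u)` turns `θ - V y` into `θ cos² u`, which cancels the
singularity of the integrand at the turning point. -/
lemma aFun_eq (he : Differentiable ℝ e) (h₀ : e 0 = 0) {θ : ℝ} (hθ : 0 < θ) :
    aFun (potentialOf e) θ = (√2)⁻¹ * ∫ u in (0)..(π / 2), deriv e (√θ * sin u) := by
  set s := √θ
  have hs : 0 < s := Real.sqrt_pos.mpr hθ
  set φ : ℝ → ℝ := fun u => e (s * sin u)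
  have hφ : StrictMonoOn φ (Icc 0 (π / 2)) := fun a ha b hb hab =>
    e.strictMono <| mul_lt_mul_of_pos_left
      (strictMonoOn_sin ⟨by linarith [ha.1, pi_pos], ha.2⟩ ⟨by linarith [hb.1, pi_pos], hb.2⟩ hab)
      hs
  have himg : φ '' Ioo 0 (π / 2) = Ioo 0 (e s) := by
    have hcont : Continuous φ := e.continuous.comp (continuous_const.mul continuous_sin)
    rw [hcont.continuousOn.image_Ioo_of_strictMonoOn (by positivity) hφ]
    simp [φ, h₀]
  have hφ' : ∀ u, HasDerivAt φ (deriv e (s * sin u) * (s * cos u)) u := fun u =>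
    (he _).hasDerivAt.comp u ((hasDerivAt_sin u).const_mul s)
  rw [aFun, Vinv_eq h₀ hθ.le, integral_of_le (h₀ ▸ e.monotone hs.le),
    integral_Ioc_eq_integral_Ioo, ← himg,
    integral_image_eq_integral_abs_deriv_smul measurableSet_Ioo
      (fun u _ => (hφ' u).hasDerivWithinAt) (hφ.injOn.mono Ioo_subset_Icc_self),
    integral_of_le (by positivity), integral_Ioc_eq_integral_Ioo,
    ← MeasureTheory.integral_const_mul]
  refine setIntegral_congr_fun measurableSet_Ioo fun u hu => ?_
  have hcos' : 0 < cos u := cos_pos_of_mem_Ioo ⟨by linarith [hu.1, pi_pos], hu.2⟩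
  have hcos : 0 < s * cos u := mul_pos hs hcos'
  have hroot : √(θ - potentialOf e (φ u)) = s * cos u := by
    rw [apply_apply, ← Real.sqrt_sq hcos.le]
    congr 1
    linear_combination -Real.sq_sqrt hθ.le - s ^ 2 * sin_sq_add_cos_sq u
  rw [smul_eq_mul, hroot, abs_of_nonneg (mul_nonneg e.monotone.deriv_nonneg hcos.le)]
  field_simp [hcos'.ne']

lemma eq_mul_of_eq_mul_sq (h₀ : e 0 = 0) {α : ℝ} (hα : ∀ y, potentialOf e y = α * y ^ 2)
    {t : ℝ} (ht : 0 ≤ t) : e t = t * e 1 := by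
  have key : ∀ t, α * e t ^ 2 = t ^ 2 := fun t => by rw [← hα, apply_apply]
  have hα₀ : α ≠ 0 := by rintro rfl; simpa using key 1
  have hpos : ∀ {t}, 0 ≤ t → 0 ≤ e t := fun ht => h₀ ▸ e.monotone ht
  refine (pow_left_inj₀ (hpos ht) (mul_nonneg ht (hpos zero_le_one)) two_ne_zero).mp ?_
  apply mul_left_cancel₀ hα₀
  linear_combination key t - t ^ 2 * key 1

end potentialOf

noncomputable def quinticProfile (p₀ p₁ p₂ t : ℝ) : ℝ :=
  2 * p₀ * t + 2 * p₁ / 3 * t ^ 3 + 2 * p₂ / 5 * t ^ 5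

lemma quinticProfile_zero {p₀ p₁ p₂ : ℝ} : quinticProfile p₀ p₁ p₂ 0 = 0 := by
  simp [quinticProfile]

namespace quinticProfile

variable {p₀ p₁ p₂ : ℝ}

lemma hasDerivAt (t : ℝ) :
    HasDerivAt (quinticProfile p₀ p₁ p₂) (2 * p₀ + 2 * p₁ * t ^ 2 + 2 * p₂ * t ^ 4) t := by
  have := (((hasDerivAt_id t).const_mul (2 * p₀)).add
    ((hasDerivAt_pow 3 t).const_mul (2 * p₁ / 3))).add ((hasDerivAt_pow 5 t).const_mul (2 * p₂ / 5))
  exact this.congr_deriv (by norm_num; ring)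

lemma deriv_eq :
    deriv (quinticProfile p₀ p₁ p₂) = fun t => 2 * p₀ + 2 * p₁ * t ^ 2 + 2 * p₂ * t ^ 4 :=
  funext fun t => (hasDerivAt t).deriv

lemma differentiable : Differentiable ℝ (quinticProfile p₀ p₁ p₂) :=
  fun t => (hasDerivAt t).differentiableAt

lemma analyticAt (t : ℝ) : AnalyticAt ℝ (quinticProfile p₀ p₁ p₂) t := by
  unfold quinticProfile; fun_prop

lemma le_deriv (hp₂ : 0 < p₂) (t : ℝ) :
    2 * p₀ - p₁ ^ 2 / (2 * p₂) ≤ deriv (quinticProfile p₀ p₁ p₂) t := by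
  have hsq : 0 ≤ 2 * p₂ * (t ^ 2 + p₁ / (2 * p₂)) ^ 2 := by positivity
  rw [deriv_eq]
  field_simp at hsq ⊢
  nlinarith [hsq]

lemma deriv_lowerBound_pos (hp₂ : 0 < p₂) (hdisc : p₁ ^ 2 < 4 * p₀ * p₂) :
    0 < 2 * p₀ - p₁ ^ 2 / (2 * p₂) := by
  rw [sub_pos, div_lt_iff₀ (by positivity)]
  linarith

lemma deriv_ne_zero (hp₂ : 0 < p₂) (hdisc : p₁ ^ 2 < 4 * p₀ * p₂) (t : ℝ) :
    deriv (quinticProfile p₀ p₁ p₂) t ≠ 0 :=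
  ((deriv_lowerBound_pos hp₂ hdisc).trans_le (le_deriv hp₂ t)).ne'

lemma integral_deriv_comp_sin {θ : ℝ} (hθ : 0 ≤ θ) :
    ∫ u in (0)..(π / 2), deriv (quinticProfile p₀ p₁ p₂) (√θ * sin u)
      = π * (p₀ + p₁ / 2 * θ + 3 * p₂ / 8 * θ ^ 2) := by
  have hθ' : √θ ^ 2 = θ := Real.sq_sqrt hθ
  have hint : ∀ n : ℕ, IntervalIntegrable (fun u => sin u ^ n) volume 0 (π / 2) :=
    fun n => (continuous_sin.pow n).intervalIntegrable _ _
  have hsin4 : ∫ u in (0)..(π / 2), sin u ^ 4 = 3 * π / 16 := by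
    rw [integral_sin_pow 2, integral_sin_sq]
    norm_num
    ring
  have hsin2 : ∫ u in (0)..(π / 2), sin u ^ 2 = π / 4 := by
    rw [integral_sin_sq]
    norm_num
    ring
  have hfun : deriv (quinticProfile p₀ p₁ p₂) ∘ (fun u => √θ * sin u)
      = fun u => 2 * p₀ + 2 * p₁ * θ * sin u ^ 2 + 2 * p₂ * θ ^ 2 * sin u ^ 4 := by
    funext u
    simp only [Function.comp_apply, deriv_eq]
    linear_combination (2 * p₁ * sin u ^ 2 + 2 * p₂ * sin u ^ 4 * (√θ ^ 2 + θ)) * hθ'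
  change ∫ u in (0)..(π / 2), (deriv (quinticProfile p₀ p₁ p₂) ∘ (fun u => √θ * sin u)) u = _
  rw [hfun, integral_add (intervalIntegrable_const.add ((hint 2).const_mul _))
      ((hint 4).const_mul _), integral_add intervalIntegrable_const ((hint 2).const_mul _),
    intervalIntegral.integral_const, intervalIntegral.integral_const_mul,
    intervalIntegral.integral_const_mul, hsin2, hsin4]
  simp only [sub_zero, smul_eq_mul]
  ring

end quinticProfile

section quinticPotential

variable {p₀ p₁ p₂ : ℝ}

noncomputable def quinticIso (hp₂ : 0 < p₂) (hdisc : p₁ ^ 2 < 4 * p₀ * p₂) : ℝ ≃o ℝ :=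
  orderIsoOfLeDeriv (quinticProfile.deriv_lowerBound_pos hp₂ hdisc)
    quinticProfile.differentiable (quinticProfile.le_deriv hp₂)

variable (hp₂ : 0 < p₂) (hdisc : p₁ ^ 2 < 4 * p₀ * p₂)

lemma coe_quinticIso : ⇑(quinticIso hp₂ hdisc) = quinticProfile p₀ p₁ p₂ := rfl

lemma isUM_quinticPotential : IsUM (potentialOf (quinticIso hp₂ hdisc)) :=
  potentialOf.isUM quinticProfile.analyticAt (quinticProfile.deriv_ne_zero hp₂ hdisc)
    quinticProfile_zero

lemma iteratedDeriv_two_quinticPotential :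
    iteratedDeriv 2 (potentialOf (quinticIso hp₂ hdisc)) 0 = 1 / (2 * p₀ ^ 2) := by
  rw [potentialOf.iteratedDeriv_two quinticProfile.analyticAt
    (quinticProfile.deriv_ne_zero hp₂ hdisc) quinticProfile_zero, coe_quinticIso,
    quinticProfile.deriv_eq]
  field_simp
  ring

lemma degAt0_quinticPotential : degAt0 (potentialOf (quinticIso hp₂ hdisc)) = 2 :=
  potentialOf.degAt0_eq quinticProfile.analyticAt (quinticProfile.deriv_ne_zero hp₂ hdisc)
    quinticProfile_zero

lemma quinticPotential_even (y : ℝ) :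
    potentialOf (quinticIso hp₂ hdisc) (-y) = potentialOf (quinticIso hp₂ hdisc) y :=
  potentialOf.even _ (fun t => by simp only [coe_quinticIso, quinticProfile]; ring) y

lemma aFun_quinticPotential {θ : ℝ} (hθ : 0 < θ) :
    aFun (potentialOf (quinticIso hp₂ hdisc)) θ
      = π / √2 * (p₀ + p₁ / 2 * θ + 3 * p₂ / 8 * θ ^ 2) := by
  rw [potentialOf.aFun_eq quinticProfile.differentiable quinticProfile_zero hθ, coe_quinticIso,
    quinticProfile.integral_deriv_comp_sin hθ.le]
  ring

lemma quinticPotential_ne_mul_sq :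
    ¬ ∃ α : ℝ, ∀ x, potentialOf (quinticIso hp₂ hdisc) x = α * x ^ 2 := by
  rintro ⟨α, hα⟩
  have h₂ := potentialOf.eq_mul_of_eq_mul_sq quinticProfile_zero hα zero_le_two
  have h₃ := potentialOf.eq_mul_of_eq_mul_sq quinticProfile_zero hα zero_le_three
  simp only [coe_quinticIso, quinticProfile] at h₂ h₃
  nlinarith

end quinticPotential

/-- for every `E > 0` there exist even, non-quadratic UM-potentials
`V₁, V₂` of degree 2 with `a(θ) = b_E(θ)` on `(0,E)` and `√(V₂''(0)/V₁''(0))` irrational. -/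
theorem stmt19 (E : ℝ) (hE : 0 < E) :
    ∃ V₁ V₂ : ℝ → ℝ, IsUM V₁ ∧ IsUM V₂ ∧ degAt0 V₁ = 2 ∧ degAt0 V₂ = 2 ∧
      (∀ x : ℝ, V₁ (-x) = V₁ x) ∧ (∀ x : ℝ, V₂ (-x) = V₂ x) ∧
      (¬ ∃ α : ℝ, ∀ x : ℝ, V₁ x = α * x ^ 2) ∧
      (¬ ∃ α : ℝ, ∀ x : ℝ, V₂ x = α * x ^ 2) ∧
      (∀ θ ∈ Set.Ioo (0:ℝ) E, aFun V₁ θ = aFun V₂ (E - θ)) ∧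
      Irrational (Real.sqrt (iteratedDeriv 2 V₂ 0 / iteratedDeriv 2 V₁ 0)) := by
  have hr : √2 ^ 2 = 2 := Real.sq_sqrt zero_le_two
  have hr₁ : 1 < √2 := by nlinarith [Real.sqrt_nonneg 2]
  have hr₂ : √2 < 2 := by nlinarith [Real.sqrt_nonneg 2]
  have hq : 0 < 2 * √2 / (3 * E ^ 2) := by positivity
  have hdisc₁ : (0 : ℝ) ^ 2 < 4 * (1 - √2 / 4) * (2 * √2 / (3 * E ^ 2)) := by
    rw [zero_pow two_ne_zero]; nlinarith
  have hdisc₂ : (-(√2 / E)) ^ 2 < 4 * 1 * (2 * √2 / (3 * E ^ 2)) := by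
    rw [neg_sq, div_pow, hr, ← sub_pos]
    field_simp
    nlinarith
  refine ⟨_, _, isUM_quinticPotential hq hdisc₁, isUM_quinticPotential hq hdisc₂,
    degAt0_quinticPotential hq hdisc₁, degAt0_quinticPotential hq hdisc₂,
    quinticPotential_even hq hdisc₁, quinticPotential_even hq hdisc₂,
    quinticPotential_ne_mul_sq hq hdisc₁, quinticPotential_ne_mul_sq hq hdisc₂,
    fun θ hθ => ?_, ?_⟩
  · rw [aFun_quinticPotential hq hdisc₁ hθ.1, aFun_quinticPotential hq hdisc₂ (sub_pos.mpr hθ.2)]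
    field_simp
    ring
  · rw [iteratedDeriv_two_quinticPotential, iteratedDeriv_two_quinticPotential,
      show 1 / (2 * 1 ^ 2) / (1 / (2 * (1 - √2 / 4) ^ 2)) = (1 - √2 / 4 : ℝ) ^ 2 by field_simp,
      Real.sqrt_sq (by linarith)]
    simpa using (irrational_sqrt_two.div_natCast (m := 4) (by norm_num)).ratCast_sub 1
end
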